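/- arXiv:1509.07397 — 3 statements merged into one kernel-verified Lean document; each statement's English description precedes it below -/
import Mathlib

section
/- Let n, Δ, d be positive integers and let H : ℕ → ℕ be a function satisfying, for all m ≥ 1, both H(m) ≤ Δ·C(m+n, n) and H(m) ≥ C(m+n+1, n+1) - C(m-Δ+n+1, n+1). Then for every ε > 0 there exists a constant a_ε (depending only on ε, n, Δ, d) such that for all m ∈ ℕ with m ≥ a_ε and d | m, one has m·(H(m)+1) ≤ d·(n+1+ε)·∑_{i=1}^{m/d - 1} H(i·d). -/
/-!
Chardin's bound gives `H(m) ≤ Δ mⁿ/n! + O(mⁿ⁻¹)`, so `m (H(m) + 1) ≤ Δ m^(n+1)/n! + O(mⁿ)`.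
The Nesterenko–Sombra bound, through `C(a + Δ, n + 1) - C(a, n + 1) ≥ Δ C(a, n)`, gives
`H(id) ≥ Δ ((i - Δ + 1) d)ⁿ / n!` for `i ≥ Δ`; comparing the sum with `∫ xⁿ dx` yields
`d ∑_{i < m/d} H(id) ≥ Δ (m - Δd)^(n+1) / (n+1)!`. The two leading coefficients differ exactly by
the factor `n + 1`, and any `ε > 0` absorbs the lower order terms for large `m`.
-/

open Filter Asymptotics Finset
open scoped Nat

theorem Nat.choose_add_mul_choose_le (a k r : ℕ) :
    a.choose (r + 1) + k * a.choose r ≤ (a + k).choose (r + 1) := by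
  induction k with
  | zero => simp
  | succ k ih =>
    rw [← add_assoc, Nat.choose_succ_succ', add_one_mul]
    have := Nat.choose_le_add a k r
    omega

theorem pow_succ_div_le_sum_range_pow (n K : ℕ) :
    (K : ℝ) ^ (n + 1) / (n + 1) ≤ ∑ j ∈ range K, ((j : ℝ) + 1) ^ n := by
  have hmono : MonotoneOn (fun x : ℝ => x ^ n) (Set.Icc 0 (0 + K)) :=
    fun x hx y _ hxy => pow_le_pow_left₀ hx.1 hxy n
  simpa [integral_pow] using hmono.integral_le_sum

theorem isEquivalent_add_const_pow (c : ℝ) (k : ℕ) :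
    (fun x : ℝ => (x + c) ^ k) ~[atTop] fun x => x ^ k :=
  (IsEquivalent.refl.add_isLittleO (isLittleO_const_id_atTop c)).pow k

theorem eventually_le_of_sub_mul_isLittleO {α : Type*} {l : Filter α} {u v g : α → ℝ} {a b : ℝ}
    (hab : a < b) (hg : ∀ᶠ x in l, 0 ≤ g x)
    (hu : (fun x => u x - a * g x) =o[l] g) (hv : (fun x => v x - b * g x) =o[l] g) :
    ∀ᶠ x in l, u x ≤ v x := by
  filter_upwards [(hv.sub hu).bound (sub_pos.2 hab), hg] with x hx hgx
  rw [Real.norm_eq_abs, Real.norm_eq_abs, abs_of_nonneg hgx] at hx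
  linarith [neg_abs_le (v x - b * g x - (u x - a * g x))]

theorem mul_pow_div_factorial_le_choose_sub_choose (Δ b n : ℕ) :
    (Δ : ℝ) * ((b : ℝ) + 2) ^ n / n ! ≤
      ((b + Δ + n + 1).choose (n + 1) : ℝ) - (b + n + 1).choose (n + 1) := by
  have hpow := Nat.pow_le_choose (α := ℝ) n (b + n + 1)
  rw [show b + n + 1 + 1 - n = b + 2 by omega] at hpow
  have hchoose : ((b + n + 1).choose (n + 1) + Δ * (b + n + 1).choose n : ℝ) ≤
      (b + Δ + n + 1).choose (n + 1) := by
    exact_mod_cast (show b + Δ + n + 1 = b + n + 1 + Δ by omega) ▸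
      Nat.choose_add_mul_choose_le (b + n + 1) Δ n
  push_cast at hpow
  calc (Δ : ℝ) * ((b : ℝ) + 2) ^ n / n ! = Δ * (((b : ℝ) + 2) ^ n / n !) := mul_div_assoc ..
    _ ≤ Δ * (b + n + 1).choose n := by gcongr
    _ ≤ ((b + Δ + n + 1).choose (n + 1) : ℝ) - (b + n + 1).choose (n + 1) := by linarith

theorem eventually_add_pow_le_sub_pow {k : ℕ} (hk : 1 < k) {A B : ℝ} (hAB : A < B) (c e : ℝ) :
    ∀ᶠ x : ℝ in atTop, A * (x + c) ^ k + x ≤ B * (x - e) ^ k := by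
  refine eventually_le_of_sub_mul_isLittleO (g := fun x => x ^ k) hAB ?_ ?_ ?_
  · filter_upwards [eventually_ge_atTop 0] with x hx using by positivity
  · have hx : (fun x : ℝ => x) =o[atTop] fun x => x ^ k := by
      simpa using isLittleO_pow_pow_atTop_of_lt (𝕜 := ℝ) hk
    refine (((isEquivalent_add_const_pow c k).isLittleO.const_mul_left A).add hx).congr_left ?_
    intro x; simp only [Pi.sub_apply]; ring
  · refine ((isEquivalent_add_const_pow (-e) k).isLittleO.const_mul_left B).congr_left ?_
    intro x; simp only [Pi.sub_apply, sub_eq_add_neg]; ring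

theorem mul_add_one_le_of_le_mul_choose {n Δ m : ℕ} {h : ℝ}
    (hh : h ≤ Δ * (m + n).choose n) :
    (m : ℝ) * (h + 1) ≤ Δ * ((m : ℝ) + n) ^ (n + 1) / n ! + m := by
  have hchoose := Nat.choose_le_pow_div (α := ℝ) n (m + n)
  push_cast at hchoose
  have hm : (m : ℝ) ≤ m + n := by linarith [(Nat.cast_nonneg n : (0 : ℝ) ≤ n)]
  calc (m : ℝ) * (h + 1) ≤ m * (Δ * (((m : ℝ) + n) ^ n / n !)) + m := by
        rw [mul_add_one]; gcongr; exact hh.trans (by gcongr)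
    _ ≤ ((m : ℝ) + n) * (Δ * (((m : ℝ) + n) ^ n / n !)) + m := by gcongr
    _ = Δ * ((m : ℝ) + n) ^ (n + 1) / n ! + m := by ring

def HilbertLowerBound (n Δ : ℕ) (H : ℕ → ℕ) : Prop :=
  ∀ m : ℕ, 1 ≤ m →
    ((m + n + 1).choose (n + 1) : ℝ) -
        (if Δ ≤ m then ((m - Δ + n + 1).choose (n + 1) : ℝ) else 0) ≤ H m

namespace HilbertLowerBound

variable {n Δ d : ℕ} {H : ℕ → ℕ}

theorem pow_le (hlower : HilbertLowerBound n Δ H) (hΔ : 0 < Δ) (hd : 0 < d) (j : ℕ) :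
    Δ * (((j : ℝ) + 1) * d) ^ n / n ! ≤ H ((Δ + j) * d) := by
  obtain ⟨b, hb⟩ : ∃ b, (Δ + j) * d = b + Δ :=
    ⟨(Δ + j) * d - Δ, by have := Nat.le_mul_of_pos_right (Δ + j) hd; omega⟩
  have hjb : (j + 1) * d ≤ b + 2 := by nlinarith
  have hH := hlower (b + Δ) (by omega)
  rw [if_pos (by omega), Nat.add_sub_cancel] at hH
  rw [hb]
  refine le_trans ?_ ((mul_pow_div_factorial_le_choose_sub_choose Δ b n).trans ?_)
  · gcongr
    exact_mod_cast hjb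
  · simpa [add_right_comm b Δ n] using hH

theorem pow_le_sum (hlower : HilbertLowerBound n Δ H) (hΔ : 0 < Δ) (hd : 0 < d) (M : ℕ) :
    Δ * (((M - Δ : ℕ) : ℝ) * d) ^ (n + 1) / (n + 1)! ≤
      d * ∑ i ∈ Icc 1 (M - 1), (H (i * d) : ℝ) := by
  set K := M - Δ
  calc Δ * ((K : ℝ) * d) ^ (n + 1) / (n + 1)!
      = d * (Δ * d ^ n / n ! * ((K : ℝ) ^ (n + 1) / (n + 1))) := by
        rw [Nat.factorial_succ]; push_cast; field_simp; ring
    _ ≤ d * (Δ * d ^ n / n ! * ∑ j ∈ range K, ((j : ℝ) + 1) ^ n) := by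
        gcongr; exact pow_succ_div_le_sum_range_pow n K
    _ = d * ∑ j ∈ range K, Δ * (((j : ℝ) + 1) * d) ^ n / n ! := by
        rw [mul_sum]; congr 1; refine sum_congr rfl fun j _ => ?_; rw [mul_pow]; ring
    _ ≤ d * ∑ j ∈ range K, (H ((Δ + j) * d) : ℝ) := by
        gcongr with j; exact hlower.pow_le hΔ hd j
    _ = d * ∑ i ∈ Ico Δ M, (H (i * d) : ℝ) := by
        rw [sum_Ico_eq_sum_range]
    _ ≤ d * ∑ i ∈ Icc 1 (M - 1), (H (i * d) : ℝ) := by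
        refine mul_le_mul_of_nonneg_left
          (sum_le_sum_of_subset_of_nonneg ?_ fun i _ _ => by positivity) (by positivity)
        intro i hi
        simp only [mem_Ico, mem_Icc] at hi ⊢
        omega

end HilbertLowerBound

/-- Abstract form of Proposition 2.3: if `H : ℕ → ℕ` satisfies Chardin's upper bound
`H(m) ≤ Δ·C(m+n,n)` and the Nesterenko–Sombra lower bound
`H(m) ≥ C(m+n+1,n+1) - C(m-Δ+n+1,n+1)` (the latter binomial interpreted as `0`
when `m < Δ`), then for every `ε > 0` there is `a_ε` such that for all multiples
`m` of `d` with `m ≥ a_ε` one has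
`m·(H(m)+1) ≤ d·(n+1+ε)·∑_{i=1}^{m/d-1} H(i·d)`. -/
theorem hilbert_ratio_bound (n Δ d : ℕ) (hn : 0 < n) (hΔ : 0 < Δ) (hd : 0 < d)
    (H : ℕ → ℕ)
    (hupper : ∀ m : ℕ, 1 ≤ m → (H m : ℝ) ≤ Δ * (m + n).choose n)
    (hlower : ∀ m : ℕ, 1 ≤ m →
      ((m + n + 1).choose (n + 1) : ℝ) -
          (if Δ ≤ m then ((m - Δ + n + 1).choose (n + 1) : ℝ) else 0) ≤ H m) :
    ∀ ε : ℝ, 0 < ε → ∃ a : ℕ, ∀ m : ℕ, a ≤ m → d ∣ m →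
      (m : ℝ) * (H m + 1) ≤
        d * ((n : ℝ) + 1 + ε) * ∑ i ∈ Finset.Icc 1 (m / d - 1), (H (i * d) : ℝ) := by
  intro ε hε
  have hlead : (Δ : ℝ) / n ! < (n + 1 + ε) * Δ / (n + 1)! := by
    rw [Nat.factorial_succ]; push_cast
    rw [div_lt_div_iff₀ (by positivity) (by positivity)]
    have : (0 : ℝ) < Δ * n ! := by positivity
    nlinarith
  obtain ⟨N, hN⟩ := eventually_atTop.mp <| tendsto_natCast_atTop_atTop.eventually
    (eventually_add_pow_le_sub_pow (by omega : 1 < n + 1) hlead n (Δ * d))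
  refine ⟨max N (Δ * d), fun m hm hdm => ?_⟩
  obtain ⟨hNm, hΔm⟩ := max_le_iff.mp hm
  have hm_eq : (((m / d - Δ : ℕ) : ℝ) * d) = m - Δ * d := by
    rw [Nat.cast_sub ((Nat.le_div_iff_mul_le hd).mpr hΔm), sub_mul, ← Nat.cast_mul,
      Nat.div_mul_cancel hdm]
  calc (m : ℝ) * (H m + 1) ≤ Δ / n ! * ((m : ℝ) + n) ^ (n + 1) + m := by
        rw [div_mul_eq_mul_div]
        exact mul_add_one_le_of_le_mul_choose (hupper m (by nlinarith))
    _ ≤ (n + 1 + ε) * Δ / (n + 1)! * ((m : ℝ) - Δ * d) ^ (n + 1) := hN m hNm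
    _ = (n + 1 + ε) * (Δ * (((m / d - Δ : ℕ) : ℝ) * d) ^ (n + 1) / (n + 1)!) := by
        rw [hm_eq]; ring
    _ ≤ (n + 1 + ε) * (d * ∑ i ∈ Icc 1 (m / d - 1), (H (i * d) : ℝ)) := by
        gcongr
        exact HilbertLowerBound.pow_le_sum hlower hΔ hd (m / d)
    _ = d * ((n : ℝ) + 1 + ε) * ∑ i ∈ Finset.Icc 1 (m / d - 1), (H (i * d) : ℝ) := by ring
end

section
/- Let n, Δ, d be positive integers. Define T(t) = ∑_{i=1}^{t} G(id) where G(z) = C(z+n+1,n+1) - C(z-Δ+n+1,n+1) = (Δ/n!)z^n + c_1 z^{n-1} + ... + c_n. Then for all integers m divisible by d (with t = m/d - 1), d·T(m/d - 1) ≥ (Δ/(n+1)!)·m^(n+1) - ((Δd + Δ|n+2-Δ|)/(2·n!))·m^n - (n+1)^3·(2Δ)^(n+1)·m^(n-1). -/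
/-!
By Pascal's rule, `G(z) = C(z+n+1, n+1) - C(z-Δ+n+1, n+1) = ∑_{r<Δ} C(z-r+n, n)`, a sum of `Δ`
monic products of `n` linear factors divided by `n!`. Vieta's formulas then give the leading
coefficient `Δ/n!`, the next one `nΔ(n+2-Δ)/(2·n!)`, and `|c_k| ≤ Δ(2Δ)^n` for all others.

With `m = d(t+1)` and `S_k(l) = ∑_{i=1}^l i^k`, `d·∑_{i≤t} G(id) = ∑_k c_k d^(k+1) S_k(t)`.
The power sums satisfy `(l+1)^(k+1)/(k+1) - (l+1)^k/2 ≤ S_k(l) ≤ (l+1)^(k+1)/(k+1)` (mean value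
and trapezoid bounds for `x^(k+1)` on unit intervals), so the leading term is bounded from below,
the next one by its absolute value, and each remaining term by `|c_k| m^(n-1)`.
-/

open Finset Polynomial
open scoped Nat

lemma pow_succ_sub_pow_eq_sum {R : Type*} [CommRing R] (x y : R) (k : ℕ) :
    x ^ (k + 1) - y ^ (k + 1) = (x - y) * ∑ i ∈ range (k + 1), x ^ i * y ^ (k - i) := by
  rw [← geom_sum₂_mul, mul_comm]
  simp

section PowerSums

variable {K : Type*} [Field K] [LinearOrder K] [IsStrictOrderedRing K]

lemma mul_add_mul_le_pow_add_pow {x y : K} (hy : 0 ≤ y) (hyx : y ≤ x) {i k : ℕ}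
    (hik : i ≤ k) :
    x ^ i * y ^ (k - i) + x ^ (k - i) * y ^ i ≤ x ^ k + y ^ k := by
  have h₁ : y ^ i ≤ x ^ i := pow_le_pow_left₀ hy hyx i
  have h₂ : y ^ (k - i) ≤ x ^ (k - i) := pow_le_pow_left₀ hy hyx (k - i)
  have hpow : ∀ z : K, z ^ i * z ^ (k - i) = z ^ k := fun z => by
    rw [← pow_add, Nat.add_sub_cancel' hik]
  nlinarith [mul_nonneg (sub_nonneg.2 h₁) (sub_nonneg.2 h₂), hpow x, hpow y]

lemma mul_pow_le_add_one_pow_sub_pow {a : K} (ha : 0 ≤ a) (k : ℕ) :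
    (k + 1) * a ^ k ≤ (a + 1) ^ (k + 1) - a ^ (k + 1) := by
  rw [pow_succ_sub_pow_eq_sum, add_sub_cancel_left, one_mul]
  calc (k + 1) * a ^ k = ∑ _i ∈ range (k + 1), a ^ k := by simp
    _ ≤ ∑ i ∈ range (k + 1), (a + 1) ^ i * a ^ (k - i) := by
      refine sum_le_sum fun i hi => ?_
      calc a ^ k = a ^ i * a ^ (k - i) := by
            rw [← pow_add, Nat.add_sub_cancel' (Nat.lt_succ_iff.1 (mem_range.1 hi))]
        _ ≤ _ := by gcongr; linarith

lemma add_one_pow_sub_pow_le {a : K} (ha : 0 ≤ a) (k : ℕ) :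
    (a + 1) ^ (k + 1) - a ^ (k + 1) ≤ (k + 1) * (a ^ k + (a + 1) ^ k) / 2 := by
  rw [pow_succ_sub_pow_eq_sum, add_sub_cancel_left, one_mul, le_div_iff₀ two_pos]
  set f : ℕ → K := fun i => (a + 1) ^ i * a ^ (k - i)
  have hreflect : ∑ i ∈ range (k + 1), f (k - i) = ∑ i ∈ range (k + 1), f i := by
    simpa using sum_range_reflect f (k + 1)
  calc (∑ i ∈ range (k + 1), f i) * 2 = ∑ i ∈ range (k + 1), (f i + f (k - i)) := by
        rw [sum_add_distrib, hreflect]; ring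
    _ ≤ ∑ _i ∈ range (k + 1), (a ^ k + (a + 1) ^ k) := by
      refine sum_le_sum fun i hi => ?_
      have hik := Nat.lt_succ_iff.1 (mem_range.1 hi)
      have := mul_add_mul_le_pow_add_pow ha (le_add_of_nonneg_right zero_le_one) hik
      simp only [f, Nat.sub_sub_self hik]
      linarith
    _ = _ := by simp only [sum_const, card_range, nsmul_eq_mul]; push_cast; ring

lemma sum_Icc_pow_le (k l : ℕ) :
    ∑ i ∈ Icc 1 l, (i : K) ^ k ≤ ((l : K) + 1) ^ (k + 1) / (k + 1) := by
  induction l with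
  | zero => simp [add_nonneg]
  | succ l ih =>
    have hmv := mul_pow_le_add_one_pow_sub_pow (Nat.cast_nonneg (α := K) (l + 1)) k
    rw [le_div_iff₀ (by positivity)] at ih ⊢
    rw [sum_Icc_succ_top (by omega)]
    push_cast at *
    linarith

lemma le_sum_Icc_pow {k : ℕ} (hk : 1 ≤ k) (l : ℕ) :
    ((l : K) + 1) ^ (k + 1) / (k + 1) - ((l : K) + 1) ^ k / 2
      ≤ ∑ i ∈ Icc 1 l, (i : K) ^ k := by
  have hk' : (2 : K) ≤ k + 1 := by exact_mod_cast Nat.succ_le_succ hk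
  induction l with
  | zero => simpa using one_div_le_one_div_of_le two_pos hk'
  | succ l ih =>
    have htrap := add_one_pow_sub_pow_le (Nat.cast_nonneg (α := K) (l + 1)) k
    have hstep : ((l + 1 : K) + 1) ^ (k + 1) / (k + 1) - (l + 1 : K) ^ (k + 1) / (k + 1)
        ≤ ((l + 1 : K) ^ k + ((l + 1 : K) + 1) ^ k) / 2 := by
      rw [← sub_div, div_le_iff₀ (by positivity)]
      push_cast at htrap
      linarith
    rw [sum_Icc_succ_top (by omega)]
    push_cast at *
    linarith

lemma pow_succ_mul_sum_Icc_pow_le {d : K} (hd : 0 ≤ d) (k t : ℕ) :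
    d ^ (k + 1) * ∑ i ∈ Icc 1 t, (i : K) ^ k ≤ (d * (t + 1)) ^ (k + 1) / (k + 1) := by
  rw [mul_pow, mul_div_assoc]
  gcongr
  exact sum_Icc_pow_le k t

lemma le_pow_succ_mul_sum_Icc_pow {d : K} (hd : 0 ≤ d) {k : ℕ} (hk : 1 ≤ k) (t : ℕ) :
    (d * (t + 1)) ^ (k + 1) / (k + 1) - d * (d * (t + 1)) ^ k / 2
      ≤ d ^ (k + 1) * ∑ i ∈ Icc 1 t, (i : K) ^ k := by
  calc _ = d ^ (k + 1) * (((t : K) + 1) ^ (k + 1) / (k + 1) - ((t : K) + 1) ^ k / 2) := by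
        rw [mul_pow, mul_pow]; ring
    _ ≤ _ := by gcongr; exact le_sum_Icc_pow hk t

end PowerSums

lemma neg_mul_le_mul_of_abs_le {K : Type*} [Field K] [LinearOrder K] [IsStrictOrderedRing K]
    {a c x y : K} (ha : |a| ≤ c) (hx : 0 ≤ x) (hxy : x ≤ y) : -(c * y) ≤ a * x :=
  calc -(c * y) ≤ -(|a| * x) := neg_le_neg (mul_le_mul ha hxy hx ((abs_nonneg a).trans ha))
    _ = -|a| * x := (neg_mul _ _).symm
    _ ≤ a * x := mul_le_mul_of_nonneg_right (neg_abs_le a) hx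

lemma mul_sum_eval_mul_eq {R : Type*} [CommSemiring R] {p : R[X]} {n : ℕ}
    (hp : p.natDegree ≤ n) (d : R) (t : ℕ) :
    d * ∑ i ∈ Icc 1 t, p.eval (i * d)
      = ∑ k ∈ range (n + 1), p.coeff k * d ^ (k + 1) * ∑ i ∈ Icc 1 t, (i : R) ^ k := by
  simp_rw [mul_sum, eval_eq_sum_range' (Nat.lt_succ_of_le hp), mul_sum]
  rw [sum_comm]
  exact sum_congr rfl fun k _ => sum_congr rfl fun i _ => by ring

theorem le_mul_sum_eval_mul {K : Type*} [Field K] [LinearOrder K] [IsStrictOrderedRing K]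
    {p : K[X]} {n : ℕ} (hn : 1 ≤ n) (hp : p.natDegree ≤ n) (hlead : 0 ≤ p.coeff n) {c : K}
    (hc : ∀ k < n - 1, |p.coeff k| ≤ c) {d m : K} (hd : 0 ≤ d) (t : ℕ)
    (hm : d * (t + 1) = m) (hm₁ : 1 ≤ m) :
    p.coeff n * (m ^ (n + 1) / (n + 1) - d * m ^ n / 2) - |p.coeff (n - 1)| * m ^ n / n
        - (n - 1) * c * m ^ (n - 1)
      ≤ d * ∑ i ∈ Icc 1 t, p.eval (i * d) := by
  obtain ⟨q, rfl⟩ : ∃ q, n = q + 1 := ⟨n - 1, by omega⟩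
  subst hm
  rw [mul_sum_eval_mul_eq hp, sum_range_succ, sum_range_succ]
  simp only [add_tsub_cancel_right] at hc ⊢
  have hS : ∀ k, 0 ≤ d ^ (k + 1) * ∑ i ∈ Icc 1 t, (i : K) ^ k := fun k =>
    mul_nonneg (pow_nonneg hd _) (sum_nonneg fun i _ => by positivity)
  have hleading := mul_le_mul_of_nonneg_left
    (le_pow_succ_mul_sum_Icc_pow hd (Nat.le_add_left 1 q) t) hlead
  have hsecond := neg_mul_le_mul_of_abs_le (le_refl |p.coeff q|) (hS q)
    (pow_succ_mul_sum_Icc_pow_le hd q t)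
  have hrest : ∑ _k ∈ range q, -(c * (d * (t + 1)) ^ q)
      ≤ ∑ k ∈ range q, p.coeff k * (d ^ (k + 1) * ∑ i ∈ Icc 1 t, (i : K) ^ k) := by
    refine sum_le_sum fun k hk => neg_mul_le_mul_of_abs_le (hc k (mem_range.1 hk)) (hS k) ?_
    calc _ ≤ (d * (t + 1)) ^ (k + 1) / (k + 1) := pow_succ_mul_sum_Icc_pow_le hd k t
      _ ≤ (d * (t + 1)) ^ (k + 1) := div_le_self (by positivity) (by simp)
      _ ≤ _ := pow_le_pow_right₀ hm₁ (mem_range.1 hk)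
  simp only [sum_const, card_range, nsmul_eq_mul, mul_assoc] at hrest ⊢
  push_cast at *
  rw [mul_div_assoc |p.coeff q|]
  linarith

section ProdXAddC

variable {ι R : Type*}

lemma coeff_prod_X_add_C_card [CommRing R] (s : Finset ι) (b : ι → R) :
    (∏ i ∈ s, (X + C (b i))).coeff #s = 1 := by
  rw [prod_X_add_C_coeff s b le_rfl, Nat.sub_self, powersetCard_zero]
  simp

lemma coeff_prod_X_add_C_card_sub_one [CommRing R] {s : Finset ι} (hs : s.Nonempty)
    (b : ι → R) : (∏ i ∈ s, (X + C (b i))).coeff (#s - 1) = ∑ i ∈ s, b i := by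
  rw [prod_X_add_C_coeff s b (Nat.sub_le _ _), Nat.sub_sub_self hs.card_pos, powersetCard_one]
  simp

lemma natDegree_prod_X_add_C_le [CommRing R] (s : Finset ι) (b : ι → R) :
    (∏ i ∈ s, (X + C (b i))).natDegree ≤ #s :=
  (natDegree_prod_le _ _).trans <| by
    simpa using sum_le_sum fun i _ =>
      (natDegree_add_C (a := b i)).trans_le (natDegree_X_le (R := R))

lemma abs_coeff_prod_X_add_C_le [CommRing R] [LinearOrder R] [IsStrictOrderedRing R]
    (s : Finset ι) (b : ι → R) (k : ℕ) :
    |(∏ i ∈ s, (X + C (b i))).coeff k| ≤ ∏ i ∈ s, (1 + |b i|) := by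
  rcases le_or_gt k #s with hk | hk
  · rw [prod_X_add_C_coeff s b hk, prod_one_add]
    calc |∑ t ∈ s.powersetCard (#s - k), ∏ i ∈ t, b i|
        ≤ ∑ t ∈ s.powersetCard (#s - k), ∏ i ∈ t, |b i| := by
          simpa only [abs_prod] using abs_sum_le_sum_abs (fun t => ∏ i ∈ t, b i) _
      _ ≤ ∑ t ∈ s.powerset, ∏ i ∈ t, |b i| :=
          sum_le_sum_of_subset_of_nonneg (fun t ht => mem_powerset.2 (mem_powersetCard.1 ht).1)
            fun _ _ _ => prod_nonneg fun _ _ => abs_nonneg _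
  · rw [coeff_eq_zero_of_natDegree_lt ((natDegree_prod_X_add_C_le s b).trans_lt hk), abs_zero]
    exact prod_nonneg fun _ _ => by positivity

end ProdXAddC

section RisingProduct

variable {R : Type*} [CommRing R]

lemma prod_Icc_sub_one_add_mul (N : ℕ) (w : R) :
    (∏ j ∈ Icc 1 N, (w - 1 + j)) * (w + N) = w * ∏ j ∈ Icc 1 N, (w + j) := by
  induction N with
  | zero => simp
  | succ N ih =>
    rw [prod_Icc_succ_top (by omega), prod_Icc_succ_top (by omega), ← mul_assoc, ← ih]
    push_cast
    ring

lemma prod_Icc_succ_sub_prod_Icc_succ_sub_one (N : ℕ) (w : R) :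
    ∏ j ∈ Icc 1 (N + 1), (w + j) - ∏ j ∈ Icc 1 (N + 1), (w - 1 + j)
      = (N + 1) * ∏ j ∈ Icc 1 N, (w + j) := by
  rw [prod_Icc_succ_top (by omega), prod_Icc_succ_top (by omega)]
  push_cast
  linear_combination -prod_Icc_sub_one_add_mul N w

/-- Pascal's rule `C(z+N+1, N+1) - C(z-Δ+N+1, N+1) = ∑_{r<Δ} C(z-r+N, N)`, cleared of
denominators. -/
lemma prod_Icc_succ_sub_prod_Icc_succ_sub (N Δ : ℕ) (z : R) :
    ∏ j ∈ Icc 1 (N + 1), (z + j) - ∏ j ∈ Icc 1 (N + 1), (z - Δ + j)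
      = (N + 1) * ∑ r ∈ range Δ, ∏ j ∈ Icc 1 N, (z - r + j) := by
  have htelescope := sum_range_sub' (fun r : ℕ => ∏ j ∈ Icc 1 (N + 1), (z - r + j)) Δ
  simp only [Nat.cast_zero, sub_zero, Nat.cast_succ, ← sub_sub] at htelescope
  rw [← htelescope, mul_sum]
  exact sum_congr rfl fun r _ => prod_Icc_succ_sub_prod_Icc_succ_sub_one N (z - r)

end RisingProduct

lemma prod_Icc_natCast_eq_factorial (n : ℕ) : ∏ j ∈ Icc 1 n, (j : ℝ) = n ! := by
  rw [← Ico_add_one_right_eq_Icc, ← Nat.cast_prod, prod_Ico_id_eq_factorial]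

lemma sum_Icc_natCast_mul_two (n : ℕ) : (∑ j ∈ Icc 1 n, (j : ℝ)) * 2 = n * (n + 1) := by
  induction n with
  | zero => simp
  | succ n ih => rw [sum_Icc_succ_top (by omega)]; push_cast; linarith

/-- The paper's `G(z) = C(z+n+1, n+1) - C(z-Δ+n+1, n+1)` (see `eval_binomialDiffPoly`), written
as `∑_{r<Δ} C(z-r+n, n)` to expose its coefficients. -/
noncomputable def binomialDiffPoly (n Δ : ℕ) : ℝ[X] :=
  C ((n ! : ℝ)⁻¹) * ∑ r ∈ range Δ, ∏ j ∈ Icc 1 n, (X + C ((j : ℝ) - r))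

section BinomialDiffPoly

variable (n Δ : ℕ)

lemma eval_binomialDiffPoly (z : ℝ) :
    (binomialDiffPoly n Δ).eval z
      = (∏ j ∈ Icc 1 (n + 1), (z + j) - ∏ j ∈ Icc 1 (n + 1), (z - Δ + j)) / (n + 1)! := by
  rw [prod_Icc_succ_sub_prod_Icc_succ_sub, Nat.factorial_succ, binomialDiffPoly]
  simp only [eval_mul, eval_C, eval_finsetSum, eval_prod, eval_add, eval_X]
  push_cast
  field_simp
  refine sum_congr rfl fun r _ => prod_congr rfl fun j _ => ?_
  ring

lemma natDegree_binomialDiffPoly_le : (binomialDiffPoly n Δ).natDegree ≤ n :=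
  (natDegree_C_mul_le _ _).trans <| natDegree_sum_le_of_forall_le _ _ fun r _ => by
    simpa using natDegree_prod_X_add_C_le (Icc 1 n) fun j : ℕ => (j : ℝ) - r

lemma coeff_binomialDiffPoly (k : ℕ) :
    (binomialDiffPoly n Δ).coeff k
      = (∑ r ∈ range Δ, (∏ j ∈ Icc 1 n, (X + C ((j : ℝ) - r))).coeff k) / n ! := by
  rw [binomialDiffPoly, coeff_C_mul, finsetSum_coeff, inv_mul_eq_div]

lemma coeff_binomialDiffPoly_self : (binomialDiffPoly n Δ).coeff n = Δ / n ! := by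
  have h := coeff_prod_X_add_C_card (R := ℝ) (Icc 1 n)
  simp only [Nat.card_Icc, add_tsub_cancel_right] at h
  simp only [coeff_binomialDiffPoly, h, sum_const, card_range, nsmul_eq_mul, mul_one]

lemma coeff_binomialDiffPoly_sub_one {n : ℕ} (hn : 1 ≤ n) :
    (binomialDiffPoly n Δ).coeff (n - 1) = n * Δ * (n + 2 - Δ) / (2 * n !) := by
  have h := coeff_prod_X_add_C_card_sub_one (R := ℝ) (nonempty_Icc.2 hn)
  simp only [Nat.card_Icc, add_tsub_cancel_right] at h
  simp only [coeff_binomialDiffPoly, h]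
  rw [div_eq_div_iff (by positivity) (by positivity)]
  suffices (∑ r ∈ range Δ, ∑ j ∈ Icc 1 n, ((j : ℝ) - r)) * 2 = n * Δ * (n + 2 - Δ) by
    linear_combination (n ! : ℝ) * this
  induction Δ with
  | zero => simp
  | succ Δ ih =>
    rw [sum_range_succ, add_mul, ih, sum_sub_distrib, sub_mul, sum_Icc_natCast_mul_two]
    simp only [sum_const, Nat.card_Icc, add_tsub_cancel_right, nsmul_eq_mul]
    push_cast
    ring

lemma abs_coeff_binomialDiffPoly_le (k : ℕ) :
    |(binomialDiffPoly n Δ).coeff k| ≤ Δ * (2 * Δ) ^ n := by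
  have hterm : ∀ r ∈ range Δ, |(∏ j ∈ Icc 1 n, (X + C ((j : ℝ) - r))).coeff k|
      ≤ (2 * Δ) ^ n * (n ! : ℝ) := fun r hr => by
    refine (abs_coeff_prod_X_add_C_le _ _ k).trans ?_
    calc ∏ j ∈ Icc 1 n, (1 + |(j : ℝ) - r|) ≤ ∏ j ∈ Icc 1 n, (2 * Δ * (j : ℝ)) :=
          prod_le_prod (fun _ _ => by positivity) fun j hj => ?_
      _ = (2 * Δ) ^ n * n ! := by
          rw [prod_mul_distrib, prod_const, Nat.card_Icc, add_tsub_cancel_right,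
            prod_Icc_natCast_eq_factorial]
    have hj : (1 : ℝ) ≤ j := by exact_mod_cast (mem_Icc.1 hj).1
    have hr : (r : ℝ) + 1 ≤ Δ := by exact_mod_cast mem_range.1 hr
    rcases abs_cases ((j : ℝ) - r) with ⟨h, -⟩ | ⟨h, -⟩ <;> rw [h] <;> nlinarith
  rw [coeff_binomialDiffPoly, abs_div, Nat.abs_cast, div_le_iff₀ (by positivity)]
  calc _ ≤ ∑ r ∈ range Δ, |(∏ j ∈ Icc 1 n, (X + C ((j : ℝ) - r))).coeff k| :=
        abs_sum_le_sum_abs (fun r : ℕ => (∏ j ∈ Icc 1 n, (X + C ((j : ℝ) - r))).coeff k) _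
    _ ≤ ∑ r ∈ range Δ, (2 * Δ) ^ n * (n ! : ℝ) := sum_le_sum hterm
    _ = _ := by rw [sum_const, card_range, nsmul_eq_mul]; ring

theorem le_mul_sum_eval_binomialDiffPoly {n : ℕ} (hn : 1 ≤ n) (d t : ℕ) {m : ℝ}
    (hm : d * ((t : ℝ) + 1) = m) (hm₁ : 1 ≤ m) :
    (Δ : ℝ) / (n + 1)! * m ^ (n + 1) - (Δ * d + Δ * |(n : ℝ) + 2 - Δ|) / (2 * n !) * m ^ n
        - ((n : ℝ) + 1) ^ 3 * (2 * Δ) ^ (n + 1) * m ^ (n - 1)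
      ≤ d * ∑ i ∈ Icc 1 t, (binomialDiffPoly n Δ).eval ((i : ℝ) * d) := by
  have key := le_mul_sum_eval_mul hn (natDegree_binomialDiffPoly_le n Δ)
    (by rw [coeff_binomialDiffPoly_self]; positivity)
    (fun k _ => abs_coeff_binomialDiffPoly_le n Δ k) (Nat.cast_nonneg d) t hm hm₁
  rw [coeff_binomialDiffPoly_self, coeff_binomialDiffPoly_sub_one Δ hn] at key
  refine le_trans ?_ key
  have hm₀ : 0 ≤ m := zero_le_one.trans hm₁
  have hfac : ((n + 1)! : ℝ) = (n + 1) * n ! := by push_cast [Nat.factorial_succ]; ring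
  have hleading : (Δ : ℝ) / (n + 1)! * m ^ (n + 1)
        - (Δ * d + Δ * |(n : ℝ) + 2 - Δ|) / (2 * n !) * m ^ n
      = Δ / n ! * (m ^ (n + 1) / (n + 1) - d * m ^ n / 2)
        - Δ * |(n : ℝ) + 2 - Δ| / (2 * n !) * m ^ n := by
    rw [hfac]; field_simp; ring
  have hsecond : |(n : ℝ) * Δ * (n + 2 - Δ) / (2 * n !)| * m ^ n / n
      = Δ * |(n : ℝ) + 2 - Δ| / (2 * n !) * m ^ n := by
    rw [abs_div, abs_mul, abs_mul, Nat.abs_cast, Nat.abs_cast,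
      abs_of_pos (by positivity : (0 : ℝ) < 2 * n !)]
    field_simp
  have hrest : ((n : ℝ) - 1) * (Δ * (2 * Δ) ^ n) * m ^ (n - 1)
      ≤ ((n : ℝ) + 1) ^ 3 * (2 * Δ) ^ (n + 1) * m ^ (n - 1) := by
    have hcube : (n : ℝ) + 1 ≤ ((n : ℝ) + 1) ^ 3 := le_self_pow₀ (by simp) (by norm_num)
    have hn' : (n : ℝ) - 1 ≤ ((n : ℝ) + 1) ^ 3 * 2 := by linarith
    rw [pow_succ (2 * (Δ : ℝ)) n]
    gcongr ?_ * _
    linarith [mul_le_mul_of_nonneg_right hn' (by positivity : (0 : ℝ) ≤ Δ * (2 * Δ) ^ n)]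
  linarith

end BinomialDiffPoly

theorem T_lower_bound_general (n Δ d : ℕ) (hn : 0 < n) (hd : 0 < d)
    (G : ℝ → ℝ)
    (hG : ∀ z : ℝ, G z =
      ((∏ j ∈ Finset.Icc 1 (n + 1), (z + j)) -
        ∏ j ∈ Finset.Icc 1 (n + 1), (z - Δ + j)) / (Nat.factorial (n + 1)))
    (m : ℕ) (hm : 0 < m) (hdm : d ∣ m) :
    (Δ : ℝ) / Nat.factorial (n + 1) * m ^ (n + 1) -
        ((Δ : ℝ) * d + Δ * |(n : ℝ) + 2 - Δ|) / (2 * Nat.factorial n) * m ^ n -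
        ((n : ℝ) + 1) ^ 3 * (2 * Δ) ^ (n + 1) * m ^ (n - 1) ≤
      d * ∑ i ∈ Finset.Icc 1 (m / d - 1), G (i * d) := by
  obtain ⟨q, rfl⟩ := hdm
  obtain ⟨t, rfl⟩ : ∃ t, q = t + 1 := Nat.exists_eq_add_one.2 (Nat.pos_of_mul_pos_left hm)
  rw [Nat.mul_div_cancel_left _ hd, Nat.add_sub_cancel]
  simp only [hG, ← eval_binomialDiffPoly]
  exact le_mul_sum_eval_binomialDiffPoly Δ hn d t (by push_cast; ring) (Nat.one_le_cast.2 hm)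

/-- With `G(z) = C(z+n+1,n+1) - C(z-Δ+n+1,n+1)` viewed as a real function and
`T(t) = ∑_{i=1}^t G(id)`, for every positive multiple `m` of `d`,
`d·T(m/d - 1) ≥ (Δ/(n+1)!)·m^(n+1) - ((Δd + Δ|n+2-Δ|)/(2·n!))·m^n
  - (n+1)^3·(2Δ)^(n+1)·m^(n-1)`. -/
theorem T_lower_bound (n Δ d : ℕ) (hn : 0 < n) (hΔ : 0 < Δ) (hd : 0 < d)
    (G : ℝ → ℝ)
    (hG : ∀ z : ℝ, G z =
      ((∏ j ∈ Finset.Icc 1 (n + 1), (z + j)) -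
        ∏ j ∈ Finset.Icc 1 (n + 1), (z - Δ + j)) / (Nat.factorial (n + 1)))
    (m : ℕ) (hm : 0 < m) (hdm : d ∣ m) :
    (Δ : ℝ) / Nat.factorial (n + 1) * m ^ (n + 1) -
        ((Δ : ℝ) * d + Δ * |(n : ℝ) + 2 - Δ|) / (2 * Nat.factorial n) * m ^ n -
        ((n : ℝ) + 1) ^ 3 * (2 * Δ) ^ (n + 1) * m ^ (n - 1) ≤
      d * ∑ i ∈ Finset.Icc 1 (m / d - 1), G (i * d) :=
  T_lower_bound_general n Δ d hn hd G hG m hm hdm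
end

section
/- Let k ≥ 2 be an integer and l a positive integer. Then C(k+1,2)·S_{k-1}(l) + C(k+1,3)·S_{k-2}(l) + ... + (k+1)·S_1(l) + l ≤ ((k+1)/2)·((l+1)^k - 1), where S_j(l) = ∑_{m=1}^l m^j. -/
/-!
Summing over `m = 1, …, l` turns the left side into `∑ₘ ∑_{h=2}^{k+1} C(k+1,h) m^{k+1-h}`
and, by telescoping, the right side into `((k+1)/2) ∑ₘ ((m+1)^k - m^k)`. Expanding
`(m+1)^k - m^k` binomially, the bound holds for each `m` term by term, because
`h · C(k+1,h) = (k+1) · C(k,h-1)` and `h ≥ 2`.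
-/

open Finset

theorem Nat.two_mul_choose_add_two_le (n i : ℕ) :
    2 * (n + 1).choose (i + 2) ≤ (n + 1) * n.choose (i + 1) := by
  rw [Nat.add_one_mul_choose_eq, mul_comm]
  exact Nat.mul_le_mul_left _ (by omega)

theorem add_one_pow_sub_pow {R : Type*} [CommRing R] (x : R) (k : ℕ) :
    (x + 1) ^ k - x ^ k = ∑ i ∈ range k, (k.choose (i + 1) : R) * x ^ (k - (i + 1)) := by
  rw [add_comm, add_pow, sum_range_succ', sub_eq_iff_eq_add]
  simp [mul_comm]

theorem sum_choose_add_two_mul_pow_le (k : ℕ) {x : ℝ} (hx : 0 ≤ x) :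
    ∑ i ∈ range k, ((k + 1).choose (i + 2) : ℝ) * x ^ (k - (i + 1)) ≤
      ((k : ℝ) + 1) / 2 * ((x + 1) ^ k - x ^ k) := by
  rw [add_one_pow_sub_pow, mul_sum]
  refine sum_le_sum fun i _ => ?_
  have hchoose : ((k + 1).choose (i + 2) : ℝ) ≤ ((k : ℝ) + 1) / 2 * k.choose (i + 1) := by
    rw [div_mul_eq_mul_div, le_div_iff₀ two_pos, mul_comm]
    exact_mod_cast Nat.two_mul_choose_add_two_le k i
  rw [← mul_assoc]
  gcongr

/-- The `+ 1` is the term `h = k + 1`, i.e. `i = k - 1`, of the sum on the right. -/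
theorem sum_Icc_choose_mul_pow_add_one {R : Type*} [CommSemiring R] {k : ℕ} (hk : 1 ≤ k)
    (x : R) :
    ∑ h ∈ Icc 2 k, ((k + 1).choose h : R) * x ^ (k + 1 - h) + 1 =
      ∑ i ∈ range k, ((k + 1).choose (i + 2) : R) * x ^ (k - (i + 1)) := by
  obtain ⟨n, rfl⟩ := Nat.exists_eq_add_of_le' hk
  rw [sum_range_succ, ← Ico_add_one_right_eq_Icc, sum_Ico_eq_sum_range]
  simp [add_comm 2]

/-- For `k ≥ 2` and `l ≥ 1`,
`∑_{h=2}^{k} C(k+1,h)·S_{k+1-h}(l) + l ≤ ((k+1)/2)·((l+1)^k - 1)`,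
where `S_j(l) = ∑_{m=1}^l m^j`. -/
theorem tail_sum_bound (k l : ℕ) (hk : 2 ≤ k) (hl : 0 < l) :
    (∑ h ∈ Finset.Icc 2 k, ((k + 1).choose h : ℝ) *
        ∑ m ∈ Finset.Icc 1 l, (m : ℝ) ^ (k + 1 - h)) + l ≤
      ((k : ℝ) + 1) / 2 * (((l : ℝ) + 1) ^ k - 1) := by
  calc _ = ∑ m ∈ Icc 1 l,
          (∑ h ∈ Icc 2 k, ((k + 1).choose h : ℝ) * (m : ℝ) ^ (k + 1 - h) + 1) := by
        simp_rw [mul_sum, sum_add_distrib, sum_comm (s := Icc 2 k)]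
        simp
    _ = ∑ m ∈ Icc 1 l,
          ∑ i ∈ range k, ((k + 1).choose (i + 2) : ℝ) * (m : ℝ) ^ (k - (i + 1)) :=
        sum_congr rfl fun m _ => sum_Icc_choose_mul_pow_add_one (by omega) _
    _ ≤ ∑ m ∈ Icc 1 l, ((k : ℝ) + 1) / 2 * (((m : ℝ) + 1) ^ k - (m : ℝ) ^ k) :=
        sum_le_sum fun m _ => sum_choose_add_two_mul_pow_le k m.cast_nonneg
    _ = ((k : ℝ) + 1) / 2 * (((l : ℝ) + 1) ^ k - 1) := by
        have htelescope := sum_Icc_sub (show 1 ≤ l from hl) fun m : ℕ => (m : ℝ) ^ k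
        push_cast [one_pow] at htelescope
        rw [← mul_sum, htelescope]
end
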